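/- arXiv:2308.15444 — 3 statements merged into one kernel-verified Lean document; each statement's English description precedes it below -/
import Mathlib

section
/- Let G be a graph and S a separator of G. Then S is an inclusion-wise minimal separator if and only if for every u ∈ S the set S∖{u} is not a separator of G. -/
open SimpleGraph

variable {V : Type*}

/-- `S` is an `a`-`b` separator: `a, b ∉ S` and they are in different components of `G - S`. -/
def IsABSep (G : SimpleGraph V) (S : Set V) (a b : V) : Prop :=
  ∃ (ha : a ∈ Sᶜ) (hb : b ∈ Sᶜ), ¬ (G.induce Sᶜ).Reachable ⟨a, ha⟩ ⟨b, hb⟩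

/-- `S` is a separator of `G`. -/
def IsSep (G : SimpleGraph V) (S : Set V) : Prop :=
  ∃ a b, IsABSep G S a b

/-- `S` is a minimal `a`-`b` separator: no proper subset is an `a`-`b` separator. -/
def IsMinABSep (G : SimpleGraph V) (S : Set V) (a b : V) : Prop :=
  IsABSep G S a b ∧ ∀ T ⊂ S, ¬ IsABSep G T a b

/-- `S` is an inclusion-wise minimal separator: no proper subset is a separator. -/
def IsInclMinSep (G : SimpleGraph V) (S : Set V) : Prop :=
  IsSep G S ∧ ∀ T ⊂ S, ¬ IsSep G T

lemma IsABSep.mono {G : SimpleGraph V} {T S : Set V} {a b : V} (hTS : T ⊆ S)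
    (ha : a ∈ Sᶜ) (hb : b ∈ Sᶜ) (h : IsABSep G T a b) : IsABSep G S a b := by
  obtain ⟨_, _, hnr⟩ := h
  exact ⟨ha, hb, fun hr => hnr (hr.map (G.induceHomOfLE (Set.compl_subset_compl.2 hTS)).toHom)⟩

lemma IsSep.exists_isABSep {G : SimpleGraph V} {S : Set V} (hS : IsSep G S) {a : V}
    (ha : a ∈ Sᶜ) : ∃ w, IsABSep G S a w := by
  obtain ⟨b, c, hb, hc, hnr⟩ := hS
  by_contra! hall
  have hreach (w : V) (hw : w ∈ Sᶜ) : (G.induce Sᶜ).Reachable ⟨a, ha⟩ ⟨w, hw⟩ := by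
    by_contra hnr'
    exact hall w ⟨ha, hw, hnr'⟩
  exact hnr ((hreach b hb).symm.trans (hreach c hc))

/-- Pick `a ∉ S` and `w` separated from `a` by `T`; deleting from `S` a vertex `u ∈ S \ T`
(namely `u = w` when `w ∈ S`) leaves a separator of `a` and `w`. -/
lemma IsSep.exists_diff_singleton_of_ssubset {G : SimpleGraph V} {S T : Set V} (hS : IsSep G S)
    (hTS : T ⊂ S) (hT : IsSep G T) : ∃ u ∈ S, IsSep G (S \ {u}) := by
  obtain ⟨a, -, ha, -, -⟩ := hS
  obtain ⟨w, hw⟩ := hT.exists_isABSep fun haT => ha (hTS.1 haT)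
  obtain ⟨u, huS, huT, hwu⟩ : ∃ u ∈ S, u ∉ T ∧ w ∉ S \ {u} := by
    by_cases hwS : w ∈ S
    · exact ⟨w, hwS, hw.2.1, fun h => h.2 rfl⟩
    · obtain ⟨u, huS, huT⟩ := Set.exists_of_ssubset hTS
      exact ⟨u, huS, huT, fun h => hwS h.1⟩
  have hTSu : T ⊆ S \ {u} := fun x hx => ⟨hTS.1 hx, fun hxu => huT (hxu ▸ hx)⟩
  exact ⟨u, huS, a, w, hw.mono hTSu (fun h => ha h.1) hwu⟩

theorem inclMinSep_iff_remove_one_general (G : SimpleGraph V)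
    (S : Set V) (hS : IsSep G S) :
    IsInclMinSep G S ↔ ∀ u ∈ S, ¬ IsSep G (S \ {u}) := by
  constructor
  · rintro ⟨-, hmin⟩ u hu
    exact hmin _ (Set.sdiff_singleton_ssubset.2 hu)
  · intro h
    refine ⟨hS, fun T hTS hT => ?_⟩
    obtain ⟨u, huS, hu⟩ := hS.exists_diff_singleton_of_ssubset hTS hT
    exact h u huS hu

/-- A separator S is inclusion-wise minimal iff S \ {u} is not a separator for every u ∈ S. -/
theorem inclMinSep_iff_remove_one [Fintype V] (G : SimpleGraph V) (hG : G.Connected)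
    (S : Set V) (hS : IsSep G S) :
    IsInclMinSep G S ↔ ∀ u ∈ S, ¬ IsSep G (S \ {u}) :=
  inclMinSep_iff_remove_one_general G S hS
end

section
/- In the melon graph on 3n+2 vertices, for every choice function x assigning to each i ∈ {1,…,n} one vertex x_i ∈ {u_i, v_i, w_i}, the set {x_1,…,x_n} is an inclusion-wise minimal separator. Consequently the melon graph has at least 3^n inclusion-wise minimal separators. -/
open SimpleGraph

variable {V : Type*}

/-- The melon graph on 3n+2 vertices: n disjoint paths u_i—v_i—w_i (encoded as
`Sum.inl (i, 0/1/2)`), a vertex a = `Sum.inr 0` adjacent to all u_i and a vertex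
b = `Sum.inr 1` adjacent to all w_i. -/
def melon (n : ℕ) : SimpleGraph (Fin n × Fin 3 ⊕ Fin 2) :=
  SimpleGraph.fromRel (fun x y => ∃ i : Fin n,
    (x = Sum.inl (i, 0) ∧ y = Sum.inl (i, 1)) ∨
    (x = Sum.inl (i, 1) ∧ y = Sum.inl (i, 2)) ∨
    (x = Sum.inr 0 ∧ y = Sum.inl (i, 0)) ∨
    (x = Sum.inr 1 ∧ y = Sum.inl (i, 2)))

/-! Deleting `x_i` cuts the `i`-th path into the part before `x_i`, attached to `a`, and the part
after it, attached to `b`; no edge of the remaining graph joins the two sides, so `a` and `b` are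
separated. If instead some `x_j` is kept, the whole `j`-th path joins `a` to `b`, and every other
surviving vertex still reaches `a` or `b` along its own path (a proper subset of a transversal
meets each path at most once), so the graph stays connected. Distinct choice functions give
distinct transversals, whence at least `3 ^ n` minimal separators. -/

namespace SimpleGraph

variable {G : SimpleGraph V}

lemma Reachable.apply_eq_of_forall_adj {α : Type*} (f : V → α)
    (hf : ∀ u v, G.Adj u v → f u = f v) {u v : V} (h : G.Reachable u v) : f u = f v := by
  rw [reachable_iff_reflTransGen] at h
  simpa [Relation.reflTransGen_eq_self] using h.lift f hf

lemma Adj.reachable_induce {s : Set V} {u v : V} (h : G.Adj u v) (hu : u ∈ s) (hv : v ∈ s) :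
    (G.induce s).Reachable ⟨u, hu⟩ ⟨v, hv⟩ :=
  Adj.reachable h

end SimpleGraph

section Separators

variable {G : SimpleGraph V}

lemma isABSep_of_apply_ne {α : Type*} {S : Set V} {a b : V} (f : V → α) (ha : a ∉ S)
    (hb : b ∉ S) (hab : f a ≠ f b) (hf : ∀ u v, u ∉ S → v ∉ S → G.Adj u v → f u = f v) :
    IsABSep G S a b :=
  ⟨ha, hb, fun h => hab <| h.apply_eq_of_forall_adj (fun w : ↥Sᶜ => f w)
    fun u v huv => hf u v u.2 v.2 huv⟩

lemma not_isSep_of_preconnected {T : Set V} (h : (G.induce Tᶜ).Preconnected) : ¬ IsSep G T :=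
  fun ⟨_, _, _, _, hab⟩ => hab (h _ _)

end Separators

section Melon

variable {n : ℕ}

def melonTransversal (x : Fin n → Fin 3) : Set (Fin n × Fin 3 ⊕ Fin 2) :=
  {v | ∃ i : Fin n, v = Sum.inl (i, x i)}

@[simp]
lemma inl_mem_melonTransversal {x : Fin n → Fin 3} {i : Fin n} {k : Fin 3} :
    Sum.inl (i, k) ∈ melonTransversal x ↔ k = x i := by
  simp [melonTransversal]

@[simp]
lemma inr_notMem_melonTransversal (x : Fin n → Fin 3) (j : Fin 2) :
    Sum.inr j ∉ melonTransversal x := by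
  simp [melonTransversal]

lemma melonTransversal_injective : Function.Injective (melonTransversal (n := n)) := by
  intro x y h
  funext i
  have : Sum.inl (i, x i) ∈ melonTransversal y := h ▸ inl_mem_melonTransversal.2 rfl
  simpa using this

lemma melon_adj_a_u (i : Fin n) : (melon n).Adj (Sum.inr 0) (Sum.inl (i, 0)) := by simp [melon]

lemma melon_adj_u_v (i : Fin n) : (melon n).Adj (Sum.inl (i, 0)) (Sum.inl (i, 1)) := by
  simp [melon]

lemma melon_adj_v_w (i : Fin n) : (melon n).Adj (Sum.inl (i, 1)) (Sum.inl (i, 2)) := by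
  simp [melon]

lemma melon_adj_b_w (i : Fin n) : (melon n).Adj (Sum.inr 1) (Sum.inl (i, 2)) := by simp [melon]

/-- The side of `b` in `melon n - melonTransversal x`: the vertices past `x i` on each path. -/
def melonSide (x : Fin n → Fin 3) : Fin n × Fin 3 ⊕ Fin 2 → Prop
  | Sum.inl (i, k) => x i < k
  | Sum.inr j => j = 1

lemma melonSide_eq_of_adj (x : Fin n → Fin 3) {u v : Fin n × Fin 3 ⊕ Fin 2}
    (hu : u ∉ melonTransversal x) (hv : v ∉ melonTransversal x) (h : (melon n).Adj u v) :
    melonSide x u = melonSide x v := by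
  rw [melon, fromRel_adj] at h
  obtain ⟨-, ⟨i, h⟩ | ⟨i, h⟩⟩ := h <;>
    rcases h with ⟨rfl, rfl⟩ | ⟨rfl, rfl⟩ | ⟨rfl, rfl⟩ | ⟨rfl, rfl⟩ <;>
    simp +decide only [melonSide, inl_mem_melonTransversal, eq_iff_iff, false_iff, iff_false,
      true_iff, iff_true] at hu hv ⊢ <;> omega

lemma isABSep_melonTransversal (x : Fin n → Fin 3) :
    IsABSep (melon n) (melonTransversal x) (Sum.inr 0) (Sum.inr 1) :=
  isABSep_of_apply_ne (melonSide x) (inr_notMem_melonTransversal x 0)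
    (inr_notMem_melonTransversal x 1) (by simp [melonSide]) fun _ _ => melonSide_eq_of_adj x

lemma melon_induce_compl_preconnected {x : Fin n → Fin 3} {T : Set (Fin n × Fin 3 ⊕ Fin 2)}
    (hT : T ⊂ melonTransversal x) : ((melon n).induce Tᶜ).Preconnected := by
  obtain ⟨hsub, hne⟩ := hT
  have eq_of_mem {i k} (h : Sum.inl (i, k) ∈ T) : k = x i := inl_mem_melonTransversal.1 (hsub h)
  have ha : Sum.inr 0 ∈ Tᶜ := fun h => inr_notMem_melonTransversal x 0 (hsub h)
  have hb : Sum.inr 1 ∈ Tᶜ := fun h => inr_notMem_melonTransversal x 1 (hsub h)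
  obtain ⟨j, hj⟩ : ∃ j, Sum.inl (j, x j) ∉ T := by
    by_contra! h
    exact hne fun v ⟨i, hv⟩ => hv ▸ h i
  have hpath (k : Fin 3) : Sum.inl (j, k) ∈ Tᶜ := fun hk => hj (eq_of_mem hk ▸ hk)
  have reach_b_a : ((melon n).induce Tᶜ).Reachable ⟨_, hb⟩ ⟨_, ha⟩ :=
    (((melon_adj_b_w j).reachable_induce hb (hpath 2)).trans
      ((melon_adj_v_w j).symm.reachable_induce (hpath 2) (hpath 1))).trans
    (((melon_adj_u_v j).symm.reachable_induce (hpath 1) (hpath 0)).trans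
      ((melon_adj_a_u j).symm.reachable_induce (hpath 0) ha))
  have reach_a : ∀ u : ↥Tᶜ, ((melon n).induce Tᶜ).Reachable u ⟨_, ha⟩ := by
    rintro ⟨u, hu⟩
    match u with
    | Sum.inr 0 => rfl
    | Sum.inr 1 => exact reach_b_a
    | Sum.inl (i, 0) => exact (melon_adj_a_u i).symm.reachable_induce hu ha
    | Sum.inl (i, 2) => exact ((melon_adj_b_w i).symm.reachable_induce hu hb).trans reach_b_a
    | Sum.inl (i, 1) =>
      by_cases hu₀ : Sum.inl (i, 0) ∈ T
      · have hw : Sum.inl (i, 2) ∈ Tᶜ := fun hw =>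
          absurd ((eq_of_mem hu₀).trans (eq_of_mem hw).symm) (by decide)
        exact (((melon_adj_v_w i).reachable_induce hu hw).trans
          ((melon_adj_b_w i).symm.reachable_induce hw hb)).trans reach_b_a
      · exact ((melon_adj_u_v i).symm.reachable_induce hu hu₀).trans
          ((melon_adj_a_u i).symm.reachable_induce hu₀ ha)
  exact fun u v => (reach_a u).trans (reach_a v).symm

lemma isInclMinSep_melonTransversal (x : Fin n → Fin 3) :
    IsInclMinSep (melon n) (melonTransversal x) :=
  ⟨⟨_, _, isABSep_melonTransversal x⟩,
    fun _ hT => not_isSep_of_preconnected (melon_induce_compl_preconnected hT)⟩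

lemma three_pow_le_ncard_isInclMinSep_melon :
    3 ^ n ≤ Set.ncard {S : Set (Fin n × Fin 3 ⊕ Fin 2) | IsInclMinSep (melon n) S} :=
  calc 3 ^ n = Nat.card (Fin n → Fin 3) := by simp
    _ ≤ Nat.card {S : Set (Fin n × Fin 3 ⊕ Fin 2) | IsInclMinSep (melon n) S} :=
      Nat.card_le_card_of_injective (fun x => ⟨_, isInclMinSep_melonTransversal x⟩)
        fun _ _ h => melonTransversal_injective (congrArg Subtype.val h)
    _ = _ := Nat.card_coe_set_eq _

end Melon

/-- In the melon graph, every transversal of the paths (one vertex from each path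
{u_i, v_i, w_i}) is an inclusion-wise minimal separator; consequently the melon graph has
at least 3^n inclusion-wise minimal separators. -/
theorem melon_inclMinSeps (n : ℕ) (x : Fin n → Fin 3) :
    IsInclMinSep (melon n) {v | ∃ i : Fin n, v = Sum.inl (i, x i)} ∧
    3 ^ n ≤ Set.ncard {S : Set (Fin n × Fin 3 ⊕ Fin 2) | IsInclMinSep (melon n) S} :=
  ⟨isInclMinSep_melonTransversal x, three_pow_le_ncard_isInclMinSep_melon⟩
end

section
/- There exists a family of graphs G_n on Θ(n) vertices in which the number of inclusion-wise minimal separators is O(n) while the number of minimal separators is at least 3^n: namely, the melon graph on 3n+2 vertices with a pendant neighbor attached to every vertex. -/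
open SimpleGraph

variable {V : Type*}

/-- The melon graph with a pendant neighbor attached to each vertex: `(v, false)` is the
original vertex `v`, and `(v, true)` is its pendant neighbor. -/
def melonPendant (n : ℕ) : SimpleGraph ((Fin n × Fin 3 ⊕ Fin 2) × Bool) :=
  SimpleGraph.fromRel (fun x y =>
    (x.2 = false ∧ y.2 = false ∧ (melon n).Adj x.1 y.1) ∨
    (x.1 = y.1 ∧ x.2 = false ∧ y.2 = true))

/-! A vertex `v` and its pendant neighbor are cut off from the rest by `{v}`, while a set
avoiding all original vertices of a connected graph separates nothing, since every pendant
vertex stays attached to its connected base. So in `addPendants G` every inclusion-wise minimal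
separator is a singleton `{v}` (for `n = 0` the melon is disconnected and `∅` is the only one).
In the melon, picking one of `u_i, v_i, w_i` on every path separates `a` from `b` (the vertices
before the picked one on each path stay on `a`'s side), and putting back any picked vertex
reopens its path, so each of the `3^n` transversals is a minimal `a`-`b` separator. -/

section Separators

variable {G : SimpleGraph V} {S : Set V} {a b : V}

theorem isABSep_of_closed_pred (P : V → Prop) (ha : a ∉ S) (hb : b ∉ S) (hPa : P a)
    (hPb : ¬ P b) (hP : ∀ x y, x ∉ S → y ∉ S → G.Adj x y → P x → P y) : IsABSep G S a b := by
  have key : ∀ {x y : ↥Sᶜ}, (G.induce Sᶜ).Walk x y → P x → P y := by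
    intro x y w
    induction w with
    | nil => exact id
    | @cons u v _ h _ ih => exact fun hx => ih (hP _ _ u.2 v.2 h hx)
  exact ⟨ha, hb, fun ⟨w⟩ => hPb (key w hPa)⟩

theorem IsInclMinSep.eq_empty (h₀ : IsSep G ∅) (h : IsInclMinSep G S) : S = ∅ :=
  ((Set.empty_subset S).eq_of_not_ssubset fun hS => h.2 ∅ hS h₀).symm

end Separators

/-- `(v, false)` is the vertex `v` of `G` and `(v, true)` its pendant neighbor. -/
def addPendants (G : SimpleGraph V) : SimpleGraph (V × Bool) :=
  SimpleGraph.fromRel (fun x y =>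
    (x.2 = false ∧ y.2 = false ∧ G.Adj x.1 y.1) ∨
    (x.1 = y.1 ∧ x.2 = false ∧ y.2 = true))

section Pendants

variable {G : SimpleGraph V}

theorem addPendants_adj {x y : V × Bool} :
    (addPendants G).Adj x y ↔
      (x.2 = false ∧ y.2 = false ∧ G.Adj x.1 y.1) ∨ (x.1 = y.1 ∧ x.2 ≠ y.2) := by
  rcases x with ⟨v, _ | _⟩ <;> rcases y with ⟨w, _ | _⟩ <;>
    simp [addPendants, G.adj_comm, eq_comm (a := w)]
  exact G.ne_of_adj

theorem addPendants_isSep_singleton [Nontrivial V] (v : V) :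
    IsSep (addPendants G) {(v, false)} := by
  obtain ⟨w, hw⟩ := exists_ne v
  refine ⟨(v, true), (w, true),
    isABSep_of_closed_pred (· = (v, true)) (by simp) (by simp) rfl (by simpa using hw) ?_⟩
  rintro x y - hy hxy rfl
  rcases addPendants_adj.1 hxy with ⟨h, -⟩ | ⟨h₁, h₂⟩
  · simp at h
  · exact (hy (Prod.ext h₁.symm (by simpa using h₂.symm))).elim

@[simps]
def addPendantsBaseHom : G →g addPendants G where
  toFun v := (v, false)
  map_rel' h := addPendants_adj.2 (Or.inl ⟨rfl, rfl, h⟩)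

theorem addPendants_not_isSep (hG : G.Preconnected) {S : Set (V × Bool)}
    (hS : ∀ v, (v, false) ∉ S) : ¬ IsSep (addPendants G) S := by
  have to_base (x : ↥Sᶜ) : ((addPendants G).induce Sᶜ).Reachable x ⟨(x.1.1, false), hS _⟩ := by
    obtain ⟨⟨v, _ | _⟩, hx⟩ := x
    · rfl
    · exact Adj.reachable (addPendants_adj.2 (Or.inr ⟨rfl, by simp⟩))
  have hconn (x y : ↥Sᶜ) : ((addPendants G).induce Sᶜ).Reachable x y := by
    obtain ⟨p⟩ := hG x.1.1 y.1.1
    have hp : ∀ z ∈ (p.map addPendantsBaseHom).support, z ∈ Sᶜ := by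
      simpa using fun v _ => hS v
    exact ((to_base x).trans ((p.map addPendantsBaseHom).induce Sᶜ hp).reachable).trans
      (to_base y).symm
  rintro ⟨a, b, ha, hb, hab⟩
  exact hab (hconn _ _)

theorem IsInclMinSep.eq_singleton_of_addPendants [Nontrivial V] (hG : G.Preconnected)
    {S : Set (V × Bool)} (h : IsInclMinSep (addPendants G) S) : ∃ v, S = {(v, false)} := by
  obtain ⟨v, hv⟩ : ∃ v, (v, false) ∈ S := by
    by_contra! hS
    exact addPendants_not_isSep hG hS h.1
  exact ⟨v, ((Set.singleton_subset_iff.2 hv).eq_of_not_ssubset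
    fun hss => h.2 _ hss (addPendants_isSep_singleton v)).symm⟩

theorem ncard_setOf_isInclMinSep_addPendants_le [Finite V] [Nontrivial V]
    (hG : G.Preconnected) : {S | IsInclMinSep (addPendants G) S}.ncard ≤ Nat.card V := by
  have hsub : {S | IsInclMinSep (addPendants G) S} ⊆ Set.range fun v => {(v, false)} :=
    fun S h => by simpa [eq_comm] using h.eq_singleton_of_addPendants hG
  calc {S | IsInclMinSep (addPendants G) S}.ncard
      ≤ (Set.range fun v => ({(v, false)} : Set (V × Bool))).ncard := Set.ncard_le_ncard hsub
    _ = Nat.card V :=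
      Set.ncard_range_of_injective (Set.singleton_injective.comp (Prod.mk_left_injective false))

end Pendants

section Melon

variable {n : ℕ}

theorem melonPendant_eq_addPendants (n : ℕ) : melonPendant n = addPendants (melon n) := rfl

def melonBranch (i : Fin n) : (melon n).Walk (.inr 0) (.inr 1) :=
  .cons (v := .inl (i, 0)) (by simp [melon]) <|
  .cons (v := .inl (i, 1)) (by simp [melon]) <|
  .cons (v := .inl (i, 2)) (by simp [melon]) <|
  .cons (by simp [melon]) .nil

theorem melonBranch_support (i : Fin n) :
    (melonBranch i).support = [.inr 0, .inl (i, 0), .inl (i, 1), .inl (i, 2), .inr 1] := rfl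

theorem melon_preconnected (hn : 0 < n) : (melon n).Preconnected := by
  have h (v) : (melon n).Reachable (.inr 0) v := by
    rcases v with ⟨i, j⟩ | k
    · exact ((melonBranch i).takeUntil _ (by fin_cases j <;> simp [melonBranch_support])).reachable
    · fin_cases k
      · rfl
      · exact (melonBranch ⟨0, hn⟩).reachable
  exact fun u v => (h u).symm.trans (h v)

def transversal (f : Fin n → Fin 3) : Set ((Fin n × Fin 3 ⊕ Fin 2) × Bool) :=
  Set.range fun i => (.inl (i, f i), false)

theorem transversal_injective : Function.Injective (transversal (n := n)) := by
  intro f g h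
  funext i
  obtain ⟨j, hj⟩ : (Sum.inl (i, f i), false) ∈ transversal g := h ▸ ⟨i, rfl⟩
  simp only [Prod.ext_iff, Sum.inl.injEq] at hj
  obtain ⟨⟨rfl, hfg⟩, -⟩ := hj
  exact hfg.symm

def melonASide (f : Fin n → Fin 3) : Fin n × Fin 3 ⊕ Fin 2 → Prop
  | .inl (i, j) => j < f i
  | .inr k => k = 0

theorem melonASide_iff_of_adj {f : Fin n → Fin 3} {u w : Fin n × Fin 3 ⊕ Fin 2}
    (h : (melon n).Adj u w) (hu : ∀ i, u ≠ .inl (i, f i)) (hw : ∀ i, w ≠ .inl (i, f i)) :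
    melonASide f u ↔ melonASide f w := by
  simp only [melon, fromRel_adj] at h
  obtain ⟨-, ⟨i, h⟩ | ⟨i, h⟩⟩ := h <;>
  rcases h with ⟨rfl, rfl⟩ | ⟨rfl, rfl⟩ | ⟨rfl, rfl⟩ | ⟨rfl, rfl⟩ <;>
  · specialize hu i
    specialize hw i
    simp [melonASide] at hu hw ⊢
    omega

theorem isABSep_transversal (f : Fin n → Fin 3) :
    IsABSep (melonPendant n) (transversal f) (.inr 0, false) (.inr 1, false) := by
  refine isABSep_of_closed_pred (fun x => melonASide f x.1) (by simp [transversal])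
    (by simp [transversal]) rfl (by simp [melonASide]) ?_
  rintro x y hx hy hxy
  rw [melonPendant_eq_addPendants] at hxy
  rcases addPendants_adj.1 hxy with ⟨hx₂, hy₂, h⟩ | ⟨h, -⟩
  · exact (melonASide_iff_of_adj h (fun i hi => hx ⟨i, Prod.ext hi.symm hx₂.symm⟩)
      (fun i hi => hy ⟨i, Prod.ext hi.symm hy₂.symm⟩)).1
  · exact fun hPx => h ▸ hPx

theorem isMinABSep_transversal (f : Fin n → Fin 3) :
    IsMinABSep (melonPendant n) (transversal f) (.inr 0, false) (.inr 1, false) := by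
  refine ⟨isABSep_transversal f, fun T hT ⟨ha, hb, hab⟩ => ?_⟩
  obtain ⟨-, ⟨i, rfl⟩, hiT⟩ := Set.exists_of_ssubset hT
  have hbranch (j : Fin 3) : (Sum.inl (i, j), false) ∉ T := fun hj => by
    obtain ⟨i', hi'⟩ := hT.subset hj
    simp only [Prod.ext_iff, Sum.inl.injEq] at hi'
    obtain ⟨⟨rfl, rfl⟩, -⟩ := hi'
    exact hiT hj
  have hw : ∀ x ∈ ((melonBranch i).map addPendantsBaseHom).support, x ∉ T := by
    simpa [melonBranch_support] using ⟨ha, hbranch 0, hbranch 1, hbranch 2, hb⟩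
  exact hab ((((melonBranch i).map addPendantsBaseHom).induce Tᶜ hw).reachable)

theorem transversal_eq_empty (f : Fin 0 → Fin 3) : transversal f = ∅ :=
  Set.range_eq_empty _

theorem ncard_setOf_isInclMinSep_melonPendant_le (n : ℕ) :
    {S | IsInclMinSep (melonPendant n) S}.ncard ≤ 3 * n + 2 := by
  rcases Nat.eq_zero_or_pos n with rfl | hn
  · have h₀ : IsSep (melonPendant 0) ∅ :=
      ⟨_, _, transversal_eq_empty Fin.elim0 ▸ isABSep_transversal Fin.elim0⟩
    calc _ ≤ ({∅} : Set (Set ((Fin 0 × Fin 3 ⊕ Fin 2) × Bool))).ncard :=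
          Set.ncard_le_ncard fun S hS => hS.eq_empty h₀
      _ ≤ 3 * 0 + 2 := by simp
  · have : Nontrivial (Fin n × Fin 3 ⊕ Fin 2) := Sum.inr_injective.nontrivial
    rw [melonPendant_eq_addPendants]
    calc _ ≤ Nat.card (Fin n × Fin 3 ⊕ Fin 2) :=
          ncard_setOf_isInclMinSep_addPendants_le (melon_preconnected hn)
      _ = 3 * n + 2 := by simp [mul_comm]

theorem three_pow_le_ncard_setOf_isMinABSep_melonPendant (n : ℕ) :
    3 ^ n ≤ {S | ∃ a b, IsMinABSep (melonPendant n) S a b}.ncard := by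
  rw [show 3 ^ n = (Set.univ : Set (Fin n → Fin 3)).ncard by simp]
  exact Set.ncard_le_ncard_of_injOn transversal (fun f _ => ⟨_, _, isMinABSep_transversal f⟩)
    transversal_injective.injOn

end Melon

/-- A family of graphs on Θ(n) vertices with O(n) (here: at most 3n+2) inclusion-wise
minimal separators but at least 3^n minimal separators: the melon graph with a pendant
neighbor attached to every vertex. -/
theorem melonPendant_gap (n : ℕ) :
    Set.ncard {S : Set ((Fin n × Fin 3 ⊕ Fin 2) × Bool) | IsInclMinSep (melonPendant n) S}
      ≤ 3 * n + 2 ∧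
    3 ^ n ≤ Set.ncard {S : Set ((Fin n × Fin 3 ⊕ Fin 2) × Bool) |
      ∃ a b, IsMinABSep (melonPendant n) S a b} :=
  ⟨ncard_setOf_isInclMinSep_melonPendant_le n, three_pow_le_ncard_setOf_isMinABSep_melonPendant n⟩
end
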